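/- arXiv:0907.5366 — 3 statements merged into one kernel-verified Lean document; each statement's English description precedes it below -/
import Mathlib

section
/- For every b ∈ ℝ, the symmetric bilinear form Ω_b on the Nappi–Witten Lie algebra 𝔫𝔴 is invariant, i.e. Ω_b([x,y],z) = Ω_b(x,[y,z]) for all x,y,z ∈ 𝔫𝔴, and non-degenerate. -/
/-!
The Nappi–Witten Lie algebra `𝔫𝔴` is the 4-dimensional complex Lie algebra with
basis `J⁺, J⁻, J, T` (coordinates `0,1,2,3` below) and brackets
`[J⁺,J⁻] = 2iT`, `[J,J⁺] = iJ⁺`, `[J,J⁻] = −iJ⁻`, `T` central.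
For `b ∈ ℝ`, `Ω_b` is the symmetric bilinear form with `Ω_b(J⁺,J⁻) = 2`,
`Ω_b(J,T) = 1`, `Ω_b(J,J) = b`, all other pairings of basis elements zero.
-/

/-- Elements of 𝔫𝔴 as coordinate vectors `(x 0)·J⁺ + (x 1)·J⁻ + (x 2)·J + (x 3)·T`. -/
abbrev NW : Type := Fin 4 → ℂ

/-- The Lie bracket of 𝔫𝔴 in coordinates. -/
def nwBracket (x y : NW) : NW :=
  ![Complex.I * (x 2 * y 0 - x 0 * y 2),
    -Complex.I * (x 2 * y 1 - x 1 * y 2),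
    0,
    2 * Complex.I * (x 0 * y 1 - x 1 * y 0)]

/-- The symmetric bilinear form `Ω_b` in coordinates. -/
def Omega (b : ℝ) (x y : NW) : ℂ :=
  2 * (x 0 * y 1 + x 1 * y 0) + (x 2 * y 3 + x 3 * y 2) + (b : ℂ) * (x 2 * y 2)

/-- For every `b ∈ ℝ`, the form `Ω_b` on the Nappi–Witten Lie algebra is invariant,
`Ω_b([x,y],z) = Ω_b(x,[y,z])`, and non-degenerate. -/
theorem omega_invariant_nondegenerate (b : ℝ) :
    (∀ x y z : NW, Omega b (nwBracket x y) z = Omega b x (nwBracket y z)) ∧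
    (∀ x : NW, (∀ y : NW, Omega b x y = 0) → x = 0) := by
  constructor
  · intro x y z
    simp only [Omega, nwBracket]
    simp [Matrix.cons_val_zero, Matrix.cons_val_one]
    ring
  · intro x hx
    have h0 := hx ![0, 1, 0, 0]
    have h1 := hx ![1, 0, 0, 0]
    have h2 := hx ![0, 0, 0, 1]
    have h3 := hx ![0, 0, 1, 0]
    simp [Omega] at h0 h1 h2 h3
    funext i
    fin_cases i <;> simp_all
end

section
/- For every μ ∈ ℝ, the linear map φ_μ : 𝔫𝔴 → 𝔫𝔴 determined on the basis by φ_μ(J) = J + μT, φ_μ(J⁺) = J⁺, φ_μ(J⁻) = J⁻, φ_μ(T) = T is a Lie algebra automorphism of 𝔫𝔴, and it satisfies Ω_b(φ_μ(x), φ_μ(y)) = Ω_{b+2μ}(x,y) for all x, y ∈ 𝔫𝔴 and all b ∈ ℝ. -/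
/-- The map `φ_μ` with `φ_μ(J) = J + μT` and fixing `J⁺`, `J⁻`, `T`, in coordinates. -/
def phi (μ : ℝ) (x : NW) : NW := ![x 0, x 1, x 2, x 3 + (μ : ℂ) * x 2]

/-- For every `μ ∈ ℝ`, the linear map `φ_μ` is a Lie algebra automorphism of 𝔫𝔴
(it is linear, bijective and preserves the bracket) and satisfies
`Ω_b(φ_μ(x), φ_μ(y)) = Ω_{b+2μ}(x,y)` for all `x, y` and all `b ∈ ℝ`. -/
theorem phi_automorphism (μ : ℝ) :
    (∀ x y : NW, phi μ (x + y) = phi μ x + phi μ y) ∧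
    (∀ (c : ℂ) (x : NW), phi μ (c • x) = c • phi μ x) ∧
    Function.Bijective (phi μ) ∧
    (∀ x y : NW, phi μ (nwBracket x y) = nwBracket (phi μ x) (phi μ y)) ∧
    (∀ (b : ℝ) (x y : NW), Omega b (phi μ x) (phi μ y) = Omega (b + 2 * μ) x y) := by
  refine ⟨?_, ?_, ?_, ?_, ?_⟩
  · intro x y
    funext i
    fin_cases i <;> simp [phi] <;> ring
  · intro c x
    funext i
    fin_cases i <;> simp [phi] <;> ring
  · constructor
    · intro x y h
      funext i
      have h0 := congrFun h 0
      have h1 := congrFun h 1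
      have h2 := congrFun h 2
      have h3 := congrFun h 3
      simp [phi] at h0 h1 h2 h3
      fin_cases i <;> simp_all <;> linear_combination h3 + (μ:ℂ) * h2
    · intro y
      refine ⟨![y 0, y 1, y 2, y 3 - (μ:ℂ) * y 2], ?_⟩
      funext i
      fin_cases i <;> simp [phi] <;> ring
  · intro x y
    funext i
    fin_cases i <;> simp [phi, nwBracket] <;> ring
  · intro b x y
    simp [phi, Omega]
    push_cast
    ring
end

section
/- Let k, p⁺, p⁻ ∈ ℝ with k < 0 and 0 < p⁺ < −k/2, let N ∈ ℕ, and let r ∈ ℤ with r ≥ −N. Then −2p⁺(p⁻ + 1/2)/k + (p⁺ + r − p⁻)²/(2(1 − k)) + N > 0. -/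
/-!
Put `t = -2p⁺/k ∈ (0, 1)` and `x = p⁺ + r − p⁻`. Then the first term of the weight is
`t (p⁺ + r + 1/2) − t x`, and completing the square in `x` bounds `x²/(2(1 − k)) − t x` below by
`−(1 − k) t²/2`. Since `t p⁺ = −k t²/2`, the weight is at least `t(1 − t)/2 + t r + N`, which is
at least `(1 − t)(t/2 + N) > 0` because `r ≥ −N`.
-/

theorem mul_le_sq_div_add_mul_sq {c : ℝ} (hc : 0 < c) (t x : ℝ) :
    t * x ≤ x ^ 2 / (2 * c) + c * t ^ 2 / 2 := by
  have hsq : 0 ≤ (x - c * t) ^ 2 / (2 * c) := by positivity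
  have hexpand : (x - c * t) ^ 2 / (2 * c) = x ^ 2 / (2 * c) + c * t ^ 2 / 2 - t * x := by
    field_simp
    ring
  linarith

/-- Positivity of the coset Virasoro weight
`h^c = −2p⁺(p⁻ + 1/2)/k + (p⁺ + r − p⁻)²/(2(1 − k)) + N` for `k < 0`,
`0 < p⁺ < −k/2`, `N ∈ ℕ`, and `r ∈ ℤ` with `r ≥ −N`. -/
theorem coset_weight_pos (k pp pm : ℝ) (hk : k < 0) (hpp₀ : 0 < pp)
    (hpp₁ : pp < -k / 2) (N : ℕ) (r : ℤ) (hr : (r : ℝ) ≥ -(N : ℝ)) :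
    -2 * pp * (pm + 1 / 2) / k + (pp + (r : ℝ) - pm) ^ 2 / (2 * (1 - k)) + (N : ℝ) > 0 := by
  obtain ⟨t, ht⟩ : ∃ t, t = -2 * pp / k := ⟨_, rfl⟩
  obtain ⟨x, hx⟩ : ∃ x, x = pp + (r : ℝ) - pm := ⟨_, rfl⟩
  have ht₀ : 0 < t := ht ▸ div_pos_of_neg_of_neg (by linarith) hk
  have ht₁ : t < 1 := ht ▸ (div_lt_one_of_neg hk).2 (by linarith)
  have hfirst : -2 * pp * (pm + 1 / 2) / k = t * (pp + r + 1 / 2) - t * x := by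
    rw [ht, hx]
    ring
  have htpp : t * pp = -k * t ^ 2 / 2 := by
    rw [ht]
    field_simp
  have hsquare := mul_le_sq_div_add_mul_sq (by linarith : (0 : ℝ) < 1 - k) t x
  have htr : t * -(N : ℝ) ≤ t * r := mul_le_mul_of_nonneg_left hr ht₀.le
  have hpos : 0 < (1 - t) * (t / 2 + N) := mul_pos (by linarith) (by positivity)
  rw [hfirst, ← hx]
  linarith
end
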